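/- arXiv:2605.25507 — 5 statements merged into one kernel-verified Lean document; each statement's English description precedes it below -/
import Mathlib

section
/- Policy advantage of the credit-assignment greedy policy. Let π be a policy of a finite-horizon MDP, τ > 0, and assume p_π > 0. Then the credit-assignment greedy policy π_G satisfies 𝔸_{π,μ}(π_G) = p_π · 𝔸^G_{π,μ}(π⁺), and consequently 𝔸_{π,μ}(π_G) ≥ τ · p_π. -/
open Finset MeasureTheory

attribute [local instance] Classical.propDecidable

/-- A finite-horizon MDP with finite state space `X`, finite action space `Y`,
horizon `H ≥ 1`, initial distribution `μ`, transition kernels `P` and rewards `r`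
(used for time steps `h ∈ {1, …, H}`). -/
structure MDP (X Y : Type*) [Fintype X] [Fintype Y] where
  H : ℕ
  H_pos : 1 ≤ H
  μ : X → ℝ
  μ_nonneg : ∀ x, 0 ≤ μ x
  μ_sum_one : ∑ x, μ x = 1
  P : ℕ → X → Y → X → ℝ
  P_nonneg : ∀ h x y x', 0 ≤ P h x y x'
  P_sum_one : ∀ h x y, ∑ x', P h x y x' = 1
  r : ℕ → X → Y → ℝ

variable {X Y : Type*} [Fintype X] [Fintype Y]

/-- A policy assigns to each time step and state a probability distribution over actions. -/
def IsPolicy (M : MDP X Y) (π : ℕ → X → Y → ℝ) : Prop :=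
  (∀ h x y, 0 ≤ π h x y) ∧ ∀ h x, ∑ y, π h x y = 1

/-- Value function `V_h^π(x)`, defined by backwards recursion with `V_{H+1}^π ≡ 0`. -/
noncomputable def Vval (M : MDP X Y) (π : ℕ → X → Y → ℝ) (h : ℕ) (x : X) : ℝ :=
  if hh : M.H < h then 0
  else ∑ y, π h x y * (M.r h x y + ∑ x', M.P h x y x' * Vval M π (h + 1) x')
termination_by M.H + 1 - h
decreasing_by omega

/-- Action-value function `Q_h^π(x,y)`. -/
noncomputable def Qval (M : MDP X Y) (π : ℕ → X → Y → ℝ) (h : ℕ) (x : X) (y : Y) : ℝ :=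
  M.r h x y + ∑ x', M.P h x y x' * Vval M π (h + 1) x'

/-- Advantage function `A_h^π(x,y) = Q_h^π(x,y) − V_h^π(x)`. -/
noncomputable def Aval (M : MDP X Y) (π : ℕ → X → Y → ℝ) (h : ℕ) (x : X) (y : Y) : ℝ :=
  Qval M π h x y - Vval M π h x

/-- Time-`h` state distribution `d_π^h` (for `h ∈ {1, …, H}`), with `d_π^1 = μ`. -/
noncomputable def dState (M : MDP X Y) (π : ℕ → X → Y → ℝ) : ℕ → X → ℝ
  | 0 => M.μ
  | 1 => M.μ
  | (h + 2) => fun x' => ∑ x, ∑ y, dState M π (h + 1) x * π (h + 1) x y * M.P (h + 1) x y x'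

/-- Expected return `J(π)`. -/
noncomputable def J (M : MDP X Y) (π : ℕ → X → Y → ℝ) : ℝ :=
  ∑ x, M.μ x * Vval M π 1 x

/-- Policy advantage `𝔸_{π,μ}(π') = (1/H) Σ_h E_{x~d_π^h} E_{y~π'_h(·|x)}[A_h^π(x,y)]`. -/
noncomputable def polAdv (M : MDP X Y) (π π' : ℕ → X → Y → ℝ) : ℝ :=
  ((M.H : ℝ))⁻¹ * ∑ h ∈ Icc 1 M.H, ∑ x, dState M π h x * ∑ y, π' h x y * Aval M π h x y

/-- The `τ`-improvable set at time `h`: states where `max_y A_h^π(x,y) ≥ τ`. -/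
noncomputable def Gset (M : MDP X Y) (π : ℕ → X → Y → ℝ) (τ : ℝ) (h : ℕ) : Set X :=
  {x | τ ≤ ⨆ y, Aval M π h x y}

/-- `p_{π,h}`: probability of the `τ`-improvable set at time `h` under `d_π^h`. -/
noncomputable def pGh (M : MDP X Y) (π : ℕ → X → Y → ℝ) (τ : ℝ) (h : ℕ) : ℝ :=
  ∑ x, if x ∈ Gset M π τ h then dState M π h x else 0

/-- Coverage `p_π = (1/H) Σ_h p_{π,h}`. -/
noncomputable def coverage (M : MDP X Y) (π : ℕ → X → Y → ℝ) (τ : ℝ) : ℝ :=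
  ((M.H : ℝ))⁻¹ * ∑ h ∈ Icc 1 M.H, pGh M π τ h

/-- Conditional policy advantage on the improvable set,
`𝔸^G_{π,μ}(π') = E[A_h^π(x,y) | x ∈ G_{h,τ}]` with `h ~ Unif{1,…,H}`, `x ~ d_π^h`,
`y ~ π'_h(·|x)`. -/
noncomputable def condAdvG (M : MDP X Y) (π π' : ℕ → X → Y → ℝ) (τ : ℝ) : ℝ :=
  (((M.H : ℝ))⁻¹ * ∑ h ∈ Icc 1 M.H, ∑ x,
      if x ∈ Gset M π τ h then dState M π h x * ∑ y, π' h x y * Aval M π h x y else 0)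
    / coverage M π τ

/-- Conditional policy advantage off the improvable set,
`𝔸^{Gc}_{π,μ}(π') = E[A_h^π(x,y) | x ∉ G_{h,τ}]`. -/
noncomputable def condAdvGc (M : MDP X Y) (π π' : ℕ → X → Y → ℝ) (τ : ℝ) : ℝ :=
  (((M.H : ℝ))⁻¹ * ∑ h ∈ Icc 1 M.H, ∑ x,
      if x ∉ Gset M π τ h then dState M π h x * ∑ y, π' h x y * Aval M π h x y else 0)
    / (1 - coverage M π τ)

/-- Total-variation distance between two (finitely supported) distributions. -/
noncomputable def tvDist (p q : X → ℝ) : ℝ := (1 / 2) * ∑ x, |p x - q x|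

/-- The statewise mixture policy `π_α = (1−α)π + απ'`. -/
def mix (α : ℝ) (π π' : ℕ → X → Y → ℝ) : ℕ → X → Y → ℝ :=
  fun h x y => (1 - α) * π h x y + α * π' h x y

/-- `ε_CPI = max_{h ∈ {1,…,H}, x} |E_{y~π'_h(·|x)}[A_h^π(x,y)]|`. -/
noncomputable def epsCPI (M : MDP X Y) (π π' : ℕ → X → Y → ℝ) : ℝ :=
  ⨆ h : (Icc 1 M.H : Finset ℕ), ⨆ x : X, |∑ y, π' h.1 x y * Aval M π h.1 x y|


lemma dState_nonneg {X Y : Type*} [Fintype X] [Fintype Y]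
    (M : MDP X Y) (π : ℕ → X → Y → ℝ) (hπ : IsPolicy M π) :
    ∀ h x, 0 ≤ dState M π h x := by
  intro h
  induction h using Nat.strong_induction_on with
  | _ h ih =>
    match h with
    | 0 => exact M.μ_nonneg
    | 1 => exact M.μ_nonneg
    | (n+2) =>
      intro x'
      apply Finset.sum_nonneg; intro x _
      apply Finset.sum_nonneg; intro y _
      exact mul_nonneg (mul_nonneg (ih (n+1) (by omega) x) (hπ.1 _ _ _)) (M.P_nonneg _ _ _ _)

lemma pi_adv_zero {X Y : Type*} [Fintype X] [Fintype Y]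
    (M : MDP X Y) (π : ℕ → X → Y → ℝ) (hπ : IsPolicy M π)
    (h : ℕ) (hh : h ≤ M.H) (x : X) :
    ∑ y, π h x y * Aval M π h x y = 0 := by
  have hV : Vval M π h x = ∑ y, π h x y * Qval M π h x y := by
    rw [Vval, dif_neg (by omega)]
    rfl
  simp only [Aval, mul_sub]
  rw [Finset.sum_sub_distrib, ← Finset.sum_mul, hπ.2 h x, one_mul, hV, sub_self]

/-- **Policy advantage of the credit-assignment greedy policy.**
If `p_π > 0` then `𝔸_{π,μ}(π_G) = p_π · 𝔸^G_{π,μ}(π⁺)` and hence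
`𝔸_{π,μ}(π_G) ≥ τ · p_π`.  Here `g` selects the greedy action
(`π⁺_h(x) ∈ argmax_y A_h^π(x,y)`), `πplus` is the corresponding deterministic
greedy policy and `πG` plays `π⁺` on the improvable set and `π` elsewhere. -/
theorem credit_greedy_policy_advantage
    {X Y : Type*} [Fintype X] [Fintype Y] [Nonempty X] [Nonempty Y]
    (M : MDP X Y) (π : ℕ → X → Y → ℝ) (hπ : IsPolicy M π)
    (τ : ℝ) (hτ : 0 < τ)
    (g : ℕ → X → Y) (hg : ∀ h x y, Aval M π h x y ≤ Aval M π h x (g h x))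
    (hp : 0 < coverage M π τ) :
    let πplus : ℕ → X → Y → ℝ := fun h x y => if y = g h x then 1 else 0
    let πG : ℕ → X → Y → ℝ := fun h x y =>
      if x ∈ Gset M π τ h then πplus h x y else π h x y
    polAdv M π πG = coverage M π τ * condAdvG M π πplus τ ∧
      τ * coverage M π τ ≤ polAdv M π πG := by
  intro πplus πG
  have hplus : ∀ h x, ∑ y, πplus h x y * Aval M π h x y = Aval M π h x (g h x) := by
    intro h x
    simp [πplus, ite_mul]
  have hAg : ∀ h x, x ∈ Gset M π τ h → τ ≤ Aval M π h x (g h x) := by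
    intro h x hx
    exact le_trans hx (ciSup_le (fun y => hg h x y))
  have key : ∀ h ∈ Icc 1 M.H, ∀ x : X,
      dState M π h x * ∑ y, πG h x y * Aval M π h x y =
      (if x ∈ Gset M π τ h then dState M π h x * ∑ y, πplus h x y * Aval M π h x y else 0) := by
    intro h hh x
    by_cases hx : x ∈ Gset M π τ h
    · simp only [hx, if_true, πG]
    · simp only [hx, if_false, πG]
      rw [pi_adv_zero M π hπ h (mem_Icc.mp hh).2 x, mul_zero]
  have hnum : polAdv M π πG =
      ((M.H : ℝ))⁻¹ * ∑ h ∈ Icc 1 M.H, ∑ x,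
        if x ∈ Gset M π τ h then dState M π h x * ∑ y, πplus h x y * Aval M π h x y else 0 := by
    unfold polAdv
    congr 1
    exact Finset.sum_congr rfl (fun h hh => Finset.sum_congr rfl (fun x _ => key h hh x))
  constructor
  · rw [hnum, condAdvG, mul_div_cancel₀ _ (ne_of_gt hp)]
  · rw [hnum]
    have : τ * coverage M π τ = ((M.H : ℝ))⁻¹ * ∑ h ∈ Icc 1 M.H, ∑ x,
        if x ∈ Gset M π τ h then dState M π h x * τ else 0 := by
      unfold coverage pGh
      rw [← mul_assoc, mul_comm τ ((M.H : ℝ))⁻¹, mul_assoc]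
      congr 1
      rw [Finset.mul_sum]
      refine Finset.sum_congr rfl (fun h _ => ?_)
      rw [Finset.mul_sum]
      refine Finset.sum_congr rfl (fun x _ => ?_)
      by_cases hx : x ∈ Gset M π τ h <;> simp [hx, mul_comm]
    rw [this]
    apply mul_le_mul_of_nonneg_left _ (by positivity)
    refine Finset.sum_le_sum (fun h hh => Finset.sum_le_sum (fun x _ => ?_))
    by_cases hx : x ∈ Gset M π τ h
    · simp only [hx, if_true, hplus]
      exact mul_le_mul_of_nonneg_left (hAg h x hx) (dState_nonneg M π hπ h x)
    · simp [hx]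
end

section
/- Credit-aware CPI improvement bound. Let π and π' be policies of a finite-horizon MDP and τ > 0. Suppose π'_h(·|x) = π_h(·|x) for every h and every x ∉ G_{h,τ}, and that E_{y~π'_h(·|x)}[A_h^π(x,y)] ≥ 0 for every h and every x ∈ G_{h,τ} (as holds when π' plays the greedy policy π⁺ on the improvable set). Define ε^τ_CPI = max_{h,x} |E_{y~π'_h(·|x)}[A_h^π(x,y)]|. Then for all α ∈ [0,1], the mixture policy π_α = (1−α)π + απ' satisfies J(π_α) − J(π) ≥ α·H·p_π·𝔸^G_{π,μ}(π') − α²·H²·p_π·ε^τ_CPI. -/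
open Finset MeasureTheory

attribute [local instance] Classical.propDecidable

variable {X Y : Type*} [Fintype X] [Fintype Y]

/-! Write `f_h(x) = E_{y ~ π'_h(·|x)}[A_h^π(x, y)]`. By the performance difference lemma, and
since `π` has zero expected advantage against itself, `J(π_α) - J(π) = α Σ_h E_{d_{π_α}^h}[f_h]`.
As `π'` agrees with `π` off the improvable sets, `f_h` vanishes there, so `0 ≤ f_h ≤ ε_CPI`;
hence replacing `d_{π_α}^h` by `d_π^h` costs at most `ε_CPI / 2 · ‖d_{π_α}^h - d_π^h‖₁`.
The mixture differs from `π` only on the improvable sets, where it moves at most `2α` of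
probability mass, so a simulation argument bounds that distance by `2α Σ_{t<h} p_{π,t} ≤ 2α H p_π`.
Summing the error over the `H` steps gives `α² H² p_π ε_CPI`, while the main term is
`α Σ_h E_{d_π^h}[f_h] = α H p_π 𝔸^G_{π,μ}(π')`. -/

lemma abs_sum_sub_mul_le {ι : Type*} [Fintype ι] {p q f : ι → ℝ} {a b : ℝ}
    (hpq : ∑ i, p i = ∑ i, q i) (hf : ∀ i, f i ∈ Set.Icc a b) :
    |∑ i, (q i - p i) * f i| ≤ (b - a) / 2 * ∑ i, |q i - p i| := by
  -- the total mass of `q - p` vanishes, so `f` may be recentred at the midpoint of `[a, b]`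
  have hcentre : ∑ i, (q i - p i) * f i = ∑ i, (q i - p i) * (f i - (a + b) / 2) := by
    simp only [mul_sub, sum_sub_distrib, ← sum_mul, hpq, sub_self, zero_mul, sub_zero]
  rw [hcentre, mul_sum]
  refine (abs_sum_le_sum_abs _ _).trans (sum_le_sum fun i _ => ?_)
  rw [abs_mul, mul_comm]
  gcongr
  rw [abs_le]
  constructor <;> linarith [(hf i).1, (hf i).2]

lemma sum_mix {X Y : Type*} [Fintype Y] (α : ℝ) {π π' : ℕ → X → Y → ℝ}
    (hπ : ∀ h x, ∑ y, π h x y = 1) (hπ' : ∀ h x, ∑ y, π' h x y = 1) (h : ℕ) (x : X) :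
    ∑ y, mix α π π' h x y = 1 := by
  simp only [mix, sum_add_distrib, ← mul_sum, hπ, hπ']
  ring

section

variable (M : MDP X Y)

/-- The expected advantage `E_{y ~ π'_h(·|x)}[A_h^π(x, y)]`. -/
noncomputable def polAdvAt (π π' : ℕ → X → Y → ℝ) (h : ℕ) (x : X) : ℝ :=
  ∑ y, π' h x y * Aval M π h x y

lemma Vval_of_lt (σ : ℕ → X → Y → ℝ) {h : ℕ} (hh : M.H < h) (x : X) : Vval M σ h x = 0 := by
  rw [Vval, dif_pos hh]

lemma Vval_of_le (σ : ℕ → X → Y → ℝ) {h : ℕ} (hh : h ≤ M.H) (x : X) :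
    Vval M σ h x = ∑ y, σ h x y * Qval M σ h x y := by
  rw [Vval, dif_neg (not_lt.2 hh)]
  rfl

lemma dState_one (σ : ℕ → X → Y → ℝ) : dState M σ 1 = M.μ := rfl

lemma dState_succ (σ : ℕ → X → Y → ℝ) {h : ℕ} (hh : 1 ≤ h) (x' : X) :
    dState M σ (h + 1) x' = ∑ x, ∑ y, dState M σ h x * σ h x y * M.P h x y x' := by
  obtain ⟨k, rfl⟩ := Nat.exists_eq_add_of_le' hh
  rfl

lemma sum_dState_succ_mul (σ : ℕ → X → Y → ℝ) {h : ℕ} (hh : 1 ≤ h) (g : X → ℝ) :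
    ∑ x', dState M σ (h + 1) x' * g x' =
      ∑ x, dState M σ h x * ∑ y, σ h x y * ∑ x', M.P h x y x' * g x' := by
  simp only [dState_succ M σ hh, sum_mul, mul_sum]
  rw [sum_comm]
  refine sum_congr rfl fun x _ => ?_
  rw [sum_comm]
  exact sum_congr rfl fun y _ => sum_congr rfl fun x' _ => by ring

lemma dState_nonneg_s4 {σ : ℕ → X → Y → ℝ} (hσ : ∀ h x y, 0 ≤ σ h x y) :
    ∀ h x, 0 ≤ dState M σ h x
  | 0, x => M.μ_nonneg x
  | 1, x => M.μ_nonneg x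
  | _ + 2, _ => sum_nonneg fun _ _ => sum_nonneg fun _ _ =>
      mul_nonneg (mul_nonneg (dState_nonneg_s4 hσ _ _) (hσ _ _ _)) (M.P_nonneg _ _ _ _)

lemma sum_dState {σ : ℕ → X → Y → ℝ} (hσ : ∀ h x, ∑ y, σ h x y = 1) :
    ∀ h, ∑ x, dState M σ h x = 1
  | 0 => M.μ_sum_one
  | 1 => M.μ_sum_one
  | h + 2 => by
    have hpush := sum_dState_succ_mul M σ (h := h + 1) (by omega) fun _ => 1
    simp only [mul_one, M.P_sum_one, hσ] at hpush
    rw [hpush, sum_dState hσ (h + 1)]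

lemma polAdvAt_self {π : ℕ → X → Y → ℝ} (hπ : ∀ h x, ∑ y, π h x y = 1) {h : ℕ} (hh : h ≤ M.H)
    (x : X) : polAdvAt M π π h x = 0 := by
  simp only [polAdvAt, Aval, mul_sub, sum_sub_distrib, ← sum_mul, hπ, one_mul]
  rw [Vval_of_le M π hh, sub_self]

lemma Vval_sub_Vval {π σ : ℕ → X → Y → ℝ} (hσ : ∀ h x, ∑ y, σ h x y = 1) {h : ℕ}
    (hh : h ≤ M.H) (x : X) :
    Vval M σ h x - Vval M π h x = polAdvAt M π σ h x +
      ∑ y, σ h x y * ∑ x', M.P h x y x' * (Vval M σ (h + 1) x' - Vval M π (h + 1) x') := by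
  have hmean : Vval M π h x = ∑ y, σ h x y * Vval M π h x := by rw [← sum_mul, hσ, one_mul]
  rw [hmean, Vval_of_le M σ hh, polAdvAt, ← sum_sub_distrib, ← sum_add_distrib]
  refine sum_congr rfl fun y _ => ?_
  simp only [Aval, Qval, mul_sub, sum_sub_distrib]
  ring

lemma sum_dState_mul_Vval_sub {π σ : ℕ → X → Y → ℝ} (hσ : ∀ h x, ∑ y, σ h x y = 1) {h : ℕ}
    (h1 : 1 ≤ h) :
    ∑ x, dState M σ h x * (Vval M σ h x - Vval M π h x) =
      ∑ t ∈ Icc h M.H, ∑ x, dState M σ t x * polAdvAt M π σ t x := by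
  by_cases hh : M.H < h
  · simp [Vval_of_lt M _ hh, Icc_eq_empty_of_lt hh]
  have ih := sum_dState_mul_Vval_sub (π := π) hσ (h := h + 1) (by omega)
  rw [sum_dState_succ_mul M σ h1] at ih
  rw [← insert_Icc_add_one_left_eq_Icc (not_lt.1 hh), sum_insert (by simp), ← ih,
    ← sum_add_distrib]
  simp only [Vval_sub_Vval M hσ (not_lt.1 hh), mul_add]
termination_by M.H + 1 - h

theorem J_sub_J_eq_sum_polAdvAt {π σ : ℕ → X → Y → ℝ} (hσ : ∀ h x, ∑ y, σ h x y = 1) :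
    J M σ - J M π = ∑ h ∈ Icc 1 M.H, ∑ x, dState M σ h x * polAdvAt M π σ h x := by
  rw [← sum_dState_mul_Vval_sub M hσ le_rfl, J, J, ← sum_sub_distrib, dState_one]
  simp only [mul_sub]

lemma sum_abs_sum_mul_P_le (h : ℕ) (w : X → Y → ℝ) :
    ∑ x', |∑ x, ∑ y, w x y * M.P h x y x'| ≤ ∑ x, ∑ y, |w x y| := by
  calc ∑ x', |∑ x, ∑ y, w x y * M.P h x y x'|
      ≤ ∑ x', ∑ x, ∑ y, |w x y| * M.P h x y x' := by
        refine sum_le_sum fun x' _ => (abs_sum_le_sum_abs _ _).trans <| sum_le_sum fun x _ => ?_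
        refine (abs_sum_le_sum_abs _ _).trans_eq <| sum_congr rfl fun y _ => ?_
        rw [abs_mul, abs_of_nonneg (M.P_nonneg h x y x')]
    _ = ∑ x, ∑ y, |w x y| := by
        rw [sum_comm]
        refine sum_congr rfl fun x _ => ?_
        rw [sum_comm]
        simp only [← mul_sum, M.P_sum_one, mul_one]

lemma sum_abs_dState_succ_sub_le {σ σ' : ℕ → X → Y → ℝ} (hσ : ∀ h x y, 0 ≤ σ h x y)
    (hσ' : IsPolicy M σ') {h : ℕ} (hh : 1 ≤ h) :
    ∑ x, |dState M σ' (h + 1) x - dState M σ (h + 1) x| ≤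
      ∑ x, |dState M σ' h x - dState M σ h x| +
        ∑ x, dState M σ h x * ∑ y, |σ' h x y - σ h x y| := by
  have hdiff : ∀ x', dState M σ' (h + 1) x' - dState M σ (h + 1) x' =
      ∑ x, ∑ y, (dState M σ' h x * σ' h x y - dState M σ h x * σ h x y) * M.P h x y x' := by
    intro x'
    simp only [dState_succ M _ hh, ← sum_sub_distrib, sub_mul]
  simp only [hdiff]
  refine (sum_abs_sum_mul_P_le M h _).trans ?_
  rw [← sum_add_distrib]
  refine sum_le_sum fun x _ => ?_
  have hd := dState_nonneg_s4 M hσ h x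
  calc ∑ y, |dState M σ' h x * σ' h x y - dState M σ h x * σ h x y|
      ≤ ∑ y, (|dState M σ' h x - dState M σ h x| * σ' h x y +
          dState M σ h x * |σ' h x y - σ h x y|) := by
        refine sum_le_sum fun y _ => ?_
        have hsplit : dState M σ' h x * σ' h x y - dState M σ h x * σ h x y =
            (dState M σ' h x - dState M σ h x) * σ' h x y +
              dState M σ h x * (σ' h x y - σ h x y) := by ring
        rw [hsplit]
        refine (abs_add_le _ _).trans_eq ?_
        rw [abs_mul, abs_mul, abs_of_nonneg (hσ'.1 h x y), abs_of_nonneg hd]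
    _ = |dState M σ' h x - dState M σ h x| + dState M σ h x * ∑ y, |σ' h x y - σ h x y| := by
        rw [sum_add_distrib, ← mul_sum, ← mul_sum, hσ'.2, mul_one]

lemma sum_abs_dState_sub_le {σ σ' : ℕ → X → Y → ℝ} (hσ : ∀ h x y, 0 ≤ σ h x y)
    (hσ' : IsPolicy M σ') :
    ∀ h, ∑ x, |dState M σ' h x - dState M σ h x| ≤
      ∑ t ∈ Ico 1 h, ∑ x, dState M σ t x * ∑ y, |σ' t x y - σ t x y|
  | 0 => by simp [dState]
  | 1 => by simp [dState_one]
  | h + 2 => by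
    rw [sum_Ico_succ_top (by omega)]
    exact (sum_abs_dState_succ_sub_le M hσ hσ' (by omega)).trans
      (add_le_add_left (sum_abs_dState_sub_le hσ hσ' (h + 1)) _)

variable {M} in
lemma IsPolicy.mix {π π' : ℕ → X → Y → ℝ} (hπ : IsPolicy M π) (hπ' : IsPolicy M π') {α : ℝ}
    (hα : α ∈ Set.Icc (0 : ℝ) 1) : IsPolicy M (mix α π π') :=
  ⟨fun h x y => add_nonneg (mul_nonneg (sub_nonneg.2 hα.2) (hπ.1 h x y))
    (mul_nonneg hα.1 (hπ'.1 h x y)), sum_mix α hπ.2 hπ'.2⟩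

lemma polAdvAt_mix {π : ℕ → X → Y → ℝ} (hπ : ∀ h x, ∑ y, π h x y = 1) (α : ℝ)
    (π' : ℕ → X → Y → ℝ) {h : ℕ} (hh : h ≤ M.H) (x : X) :
    polAdvAt M π (mix α π π') h x = α * polAdvAt M π π' h x := by
  have hself := polAdvAt_self M hπ hh x
  simp only [polAdvAt, mix, add_mul, sum_add_distrib, mul_assoc, ← mul_sum] at hself ⊢
  rw [hself]
  ring

lemma J_mix_sub_J {π π' : ℕ → X → Y → ℝ} (hπ : ∀ h x, ∑ y, π h x y = 1)
    (hπ' : ∀ h x, ∑ y, π' h x y = 1) (α : ℝ) :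
    J M (mix α π π') - J M π =
      α * ∑ h ∈ Icc 1 M.H, ∑ x, dState M (mix α π π') h x * polAdvAt M π π' h x := by
  rw [J_sub_J_eq_sum_polAdvAt M (sum_mix α hπ hπ'), mul_sum]
  refine sum_congr rfl fun h hh => ?_
  rw [mul_sum]
  refine sum_congr rfl fun x _ => ?_
  rw [polAdvAt_mix M hπ α π' (mem_Icc.1 hh).2]
  ring

lemma abs_polAdvAt_le_epsCPI (π π' : ℕ → X → Y → ℝ) {h : ℕ} (hh : h ∈ Icc 1 M.H) (x : X) :
    |polAdvAt M π π' h x| ≤ epsCPI M π π' :=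
  (le_ciSup (Set.finite_range _).bddAbove x).trans
    (le_ciSup (f := fun t : (Icc 1 M.H : Finset ℕ) => ⨆ x, |polAdvAt M π π' t x|)
      (Set.finite_range _).bddAbove ⟨h, hh⟩)

lemma epsCPI_nonneg (π π' : ℕ → X → Y → ℝ) : 0 ≤ epsCPI M π π' :=
  Real.iSup_nonneg fun _ => Real.iSup_nonneg fun _ => abs_nonneg _

lemma MDP.H_ne_zero : (M.H : ℝ) ≠ 0 := by
  exact_mod_cast (M.H_pos.trans_lt' zero_lt_one).ne'

lemma H_mul_coverage (π : ℕ → X → Y → ℝ) (τ : ℝ) :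
    (M.H : ℝ) * coverage M π τ = ∑ h ∈ Icc 1 M.H, pGh M π τ h := by
  rw [coverage, mul_inv_cancel_left₀ M.H_ne_zero]

lemma H_mul_coverage_mul_condAdvG {π π' : ℕ → X → Y → ℝ} {τ : ℝ} (hp : coverage M π τ ≠ 0)
    (hzero : ∀ h ∈ Icc 1 M.H, ∀ x ∉ Gset M π τ h, polAdvAt M π π' h x = 0) :
    M.H * coverage M π τ * condAdvG M π π' τ =
      ∑ h ∈ Icc 1 M.H, ∑ x, dState M π h x * polAdvAt M π π' h x := by
  rw [condAdvG, mul_div_assoc', mul_div_right_comm, mul_div_cancel_right₀ _ hp,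
    mul_inv_cancel_left₀ M.H_ne_zero]
  refine sum_congr rfl fun h hh => sum_congr rfl fun x _ => ?_
  split_ifs with hx
  · rfl
  · exact (mul_eq_zero_of_right _ (hzero h hh x hx)).symm

lemma sum_dState_mul_abs_mix_sub_le {π π' : ℕ → X → Y → ℝ} (hπ : IsPolicy M π)
    (hπ' : IsPolicy M π') {α : ℝ} (hα : 0 ≤ α) {τ : ℝ} {h : ℕ}
    (hagree : ∀ x, x ∉ Gset M π τ h → ∀ y, π' h x y = π h x y) :
    ∑ x, dState M π h x * ∑ y, |mix α π π' h x y - π h x y| ≤ 2 * α * pGh M π τ h := by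
  rw [pGh, mul_sum]
  refine sum_le_sum fun x _ => ?_
  have hmix : ∑ y, |mix α π π' h x y - π h x y| = α * ∑ y, |π' h x y - π h x y| := by
    rw [mul_sum]
    refine sum_congr rfl fun y _ => ?_
    rw [show mix α π π' h x y - π h x y = α * (π' h x y - π h x y) by simp only [mix]; ring,
      abs_mul, abs_of_nonneg hα]
  rw [hmix]
  split_ifs with hx
  · have hl1 : ∑ y, |π' h x y - π h x y| ≤ 2 := by
      calc ∑ y, |π' h x y - π h x y| ≤ ∑ y, (π' h x y + π h x y) :=
            sum_le_sum fun y _ => (abs_sub _ _).trans_eq <| by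
              rw [abs_of_nonneg (hπ'.1 h x y), abs_of_nonneg (hπ.1 h x y)]
        _ = 2 := by rw [sum_add_distrib, hπ.2, hπ'.2]; norm_num
    linarith [mul_le_mul_of_nonneg_left hl1 (mul_nonneg hα (dState_nonneg_s4 M hπ.1 h x))]
  · simp [hagree x hx]

lemma sum_abs_dState_mix_sub_le {π π' : ℕ → X → Y → ℝ} (hπ : IsPolicy M π)
    (hπ' : IsPolicy M π') {α : ℝ} (hα : α ∈ Set.Icc (0 : ℝ) 1) {τ : ℝ}
    (hagree : ∀ h ∈ Icc 1 M.H, ∀ x, x ∉ Gset M π τ h → ∀ y, π' h x y = π h x y)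
    {h : ℕ} (hh : h ≤ M.H + 1) :
    ∑ x, |dState M (mix α π π') h x - dState M π h x| ≤ 2 * α * (M.H * coverage M π τ) := by
  have hsub : Ico 1 h ⊆ Icc 1 M.H := fun t ht => by
    simp only [mem_Ico, mem_Icc] at ht ⊢
    omega
  calc ∑ x, |dState M (mix α π π') h x - dState M π h x|
      ≤ ∑ t ∈ Ico 1 h, 2 * α * pGh M π τ t :=
        (sum_abs_dState_sub_le M hπ.1 (hπ.mix hπ' hα) h).trans <| sum_le_sum fun t ht =>
          sum_dState_mul_abs_mix_sub_le M hπ hπ' hα.1 (hagree t (hsub ht))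
    _ ≤ ∑ t ∈ Icc 1 M.H, 2 * α * pGh M π τ t :=
        sum_le_sum_of_subset_of_nonneg hsub fun t _ _ =>
          mul_nonneg (by linarith [hα.1]) (sum_nonneg fun x _ => by
            split_ifs
            exacts [dState_nonneg_s4 M hπ.1 t x, le_rfl])
    _ = 2 * α * (M.H * coverage M π τ) := by rw [← mul_sum, H_mul_coverage]

lemma sum_dState_mul_polAdvAt_le_mix {π π' : ℕ → X → Y → ℝ} (hπ : IsPolicy M π)
    (hπ' : IsPolicy M π') {α : ℝ} (hα : α ∈ Set.Icc (0 : ℝ) 1) {τ : ℝ}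
    (hagree : ∀ h ∈ Icc 1 M.H, ∀ x, x ∉ Gset M π τ h → ∀ y, π' h x y = π h x y)
    {h : ℕ} (hh : h ≤ M.H + 1)
    (hrange : ∀ x, polAdvAt M π π' h x ∈ Set.Icc 0 (epsCPI M π π')) :
    ∑ x, dState M π h x * polAdvAt M π π' h x - α * (M.H * coverage M π τ) * epsCPI M π π' ≤
      ∑ x, dState M (mix α π π') h x * polAdvAt M π π' h x := by
  have hmass : ∑ x, dState M π h x = ∑ x, dState M (mix α π π') h x := by
    rw [sum_dState M hπ.2, sum_dState M (hπ.mix hπ' hα).2]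
  have hshift := abs_sum_sub_mul_le hmass hrange
  have hdrift := sum_abs_dState_mix_sub_le M hπ hπ' hα hagree hh
  have hsplit : ∑ x, dState M (mix α π π') h x * polAdvAt M π π' h x =
      ∑ x, dState M π h x * polAdvAt M π π' h x +
        ∑ x, (dState M (mix α π π') h x - dState M π h x) * polAdvAt M π π' h x := by
    rw [← sum_add_distrib]
    exact sum_congr rfl fun x _ => by ring
  have hε := epsCPI_nonneg M π π'
  rw [hsplit]
  linarith [neg_abs_le (∑ x, (dState M (mix α π π') h x - dState M π h x) *
    polAdvAt M π π' h x), mul_le_mul_of_nonneg_left hdrift (div_nonneg hε zero_le_two)]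

end

theorem credit_aware_cpi_bound_general
    {X Y : Type*} [Fintype X] [Fintype Y]
    (M : MDP X Y) (π π' : ℕ → X → Y → ℝ)
    (hπ : IsPolicy M π) (hπ' : IsPolicy M π')
    (τ : ℝ) (hp : 0 < coverage M π τ)
    (hagree : ∀ h ∈ Icc 1 M.H, ∀ x, x ∉ Gset M π τ h → ∀ y, π' h x y = π h x y)
    (hpos : ∀ h ∈ Icc 1 M.H, ∀ x ∈ Gset M π τ h, 0 ≤ ∑ y, π' h x y * Aval M π h x y)
    (α : ℝ) (hα : α ∈ Set.Icc (0 : ℝ) 1) :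
    α * (M.H : ℝ) * coverage M π τ * condAdvG M π π' τ
        - α ^ 2 * (M.H : ℝ) ^ 2 * coverage M π τ * epsCPI M π π'
      ≤ J M (mix α π π') - J M π := by
  have hzero : ∀ h ∈ Icc 1 M.H, ∀ x ∉ Gset M π τ h, polAdvAt M π π' h x = 0 :=
    fun h hh x hx => by
      simp only [polAdvAt, hagree h hh x hx]
      exact polAdvAt_self M hπ.2 (mem_Icc.1 hh).2 x
  have hrange : ∀ h ∈ Icc 1 M.H, ∀ x, polAdvAt M π π' h x ∈ Set.Icc 0 (epsCPI M π π') :=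
    fun h hh x => ⟨if hx : x ∈ Gset M π τ h then hpos h hh x hx else (hzero h hh x hx).ge,
      (le_abs_self _).trans (abs_polAdvAt_le_epsCPI M π π' hh x)⟩
  have hsum := sum_le_sum fun h hh => sum_dState_mul_polAdvAt_le_mix M hπ hπ' hα hagree
    (by linarith [(mem_Icc.1 hh).2]) (hrange h hh)
  rw [sum_sub_distrib, sum_const, Nat.card_Icc, Nat.add_sub_cancel, nsmul_eq_mul] at hsum
  rw [J_mix_sub_J M hπ.2 hπ'.2, mul_assoc α, mul_assoc α,
    H_mul_coverage_mul_condAdvG M hp.ne' hzero]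
  linarith [mul_le_mul_of_nonneg_left hsum hα.1]

/-- **Credit-aware CPI improvement bound.**
If `π'` agrees with `π` off the improvable sets and has nonnegative expected
advantage on them, then for `α ∈ [0,1]`,
`J(π_α) − J(π) ≥ α·H·p_π·𝔸^G_{π,μ}(π') − α²·H²·p_π·ε^τ_CPI`. -/
theorem credit_aware_cpi_bound
    {X Y : Type*} [Fintype X] [Fintype Y] [Nonempty X] [Nonempty Y]
    (M : MDP X Y) (π π' : ℕ → X → Y → ℝ)
    (hπ : IsPolicy M π) (hπ' : IsPolicy M π')
    (τ : ℝ) (hτ : 0 < τ) (hp : 0 < coverage M π τ)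
    (hagree : ∀ h ∈ Icc 1 M.H, ∀ x, x ∉ Gset M π τ h → ∀ y, π' h x y = π h x y)
    (hpos : ∀ h ∈ Icc 1 M.H, ∀ x ∈ Gset M π τ h, 0 ≤ ∑ y, π' h x y * Aval M π h x y)
    (α : ℝ) (hα : α ∈ Set.Icc (0 : ℝ) 1) :
    α * (M.H : ℝ) * coverage M π τ * condAdvG M π π' τ
        - α ^ 2 * (M.H : ℝ) ^ 2 * coverage M π τ * epsCPI M π π'
      ≤ J M (mix α π π') - J M π :=
  credit_aware_cpi_bound_general M π π' hπ hπ' τ hp hagree hpos α hα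
end

section
/- Variance bound for the advantage estimator's per-sample term. Let π be a policy of a finite-horizon MDP with rewards bounded in [0, R_max], let d be a distribution over triples (x,y,h) ∈ X × Y × {1,…,H} whose conditional distribution of y given (x,h) is uniform on Y, let Q̂ : X × Y × {1,…,H} → [0, H·R_max] be any function, and let π̂⁺ be any deterministic policy (π̂⁺_h : X → Y). Define the per-sample term Y₁ = |Y|·(1{y = π̂⁺_h(x)} − π_h(y|x))·Q̂(x,y,h) for (x,y,h) ~ d. Then Var(Y₁) ≤ E[Y₁²] ≤ 2·|Y|·H²·R_max². -/
open Finset MeasureTheory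

attribute [local instance] Classical.propDecidable

variable {X Y : Type*} [Fintype X] [Fintype Y]

/-- **Variance bound for the advantage estimator's per-sample term.**
For any distribution `d` over `(x,h)` (extended to `(x,y,h)` by drawing `y`
uniformly), any `Q̂ : X × Y × {1,…,H} → [0, H·R_max]` and any deterministic policy
`ĝ`, the per-sample term `Y₁ = |Y|·(1{y = ĝ_h(x)} − π_h(y|x))·Q̂(x,y,h)` satisfies
`Var(Y₁) ≤ E[Y₁²] ≤ 2·|Y|·H²·R_max²`. -/
theorem variance_bound_per_sample_term
    {X Y : Type*} [Fintype X] [Fintype Y] [Nonempty X] [Nonempty Y]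
    (M : MDP X Y) (π : ℕ → X → Y → ℝ) (hπ : IsPolicy M π)
    (Rmax : ℝ) (hr : ∀ h ∈ Icc 1 M.H, ∀ x y, M.r h x y ∈ Set.Icc 0 Rmax)
    (dXH : X → ℕ → ℝ)
    (hd0 : ∀ x h, 0 ≤ dXH x h)
    (hdsupp : ∀ x h, h ∉ Icc 1 M.H → dXH x h = 0)
    (hd1 : ∑ h ∈ Icc 1 M.H, ∑ x, dXH x h = 1)
    (Qhat : X → Y → ℕ → ℝ)
    (hQhat : ∀ x y h, Qhat x y h ∈ Set.Icc 0 ((M.H : ℝ) * Rmax))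
    (ghat : ℕ → X → Y) :
    let Edist : (X → Y → ℕ → ℝ) → ℝ := fun f =>
      ∑ h ∈ Icc 1 M.H, ∑ x, dXH x h * ((Fintype.card Y : ℝ))⁻¹ * ∑ y, f x y h
    let Y1 : X → Y → ℕ → ℝ := fun x y h =>
      (Fintype.card Y : ℝ) * ((if y = ghat h x then 1 else 0) - π h x y) * Qhat x y h
    Edist (fun x y h => (Y1 x y h) ^ 2) - (Edist Y1) ^ 2
        ≤ Edist (fun x y h => (Y1 x y h) ^ 2) ∧
      Edist (fun x y h => (Y1 x y h) ^ 2)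
        ≤ 2 * (Fintype.card Y : ℝ) * (M.H : ℝ) ^ 2 * Rmax ^ 2 := by

  classical
  intro Edist Y1
  have hKpos : (0:ℝ) < (Fintype.card Y : ℝ) := by
    exact_mod_cast Fintype.card_pos
  have hHR : (0:ℝ) ≤ (M.H : ℝ) * Rmax := by
    obtain ⟨x⟩ := ‹Nonempty X›; obtain ⟨y⟩ := ‹Nonempty Y›
    exact (hQhat x y 1).1.trans (hQhat x y 1).2
  have hπ01 : ∀ h x y, π h x y ≤ 1 := by
    intro h x y
    calc π h x y ≤ ∑ y', π h x y' :=
          Finset.single_le_sum (fun y' _ => hπ.1 h x y') (Finset.mem_univ y)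
      _ = 1 := hπ.2 h x
  -- inner bound
  have hinner : ∀ x h, ∑ y, (Y1 x y h) ^ 2
      ≤ 2 * (Fintype.card Y : ℝ) ^ 2 * ((M.H : ℝ) * Rmax) ^ 2 := by
    intro x h
    have step : ∀ y, (Y1 x y h) ^ 2 ≤
        (Fintype.card Y : ℝ) ^ 2 * ((M.H : ℝ) * Rmax) ^ 2 *
          |(if y = ghat h x then (1:ℝ) else 0) - π h x y| := by
      intro y
      have habs : |(if y = ghat h x then (1:ℝ) else 0) - π h x y| ≤ 1 := by
        have := hπ.1 h x y; have := hπ01 h x y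
        rw [abs_le]; constructor <;> split_ifs <;> linarith
      have hQ2 : (Qhat x y h) ^ 2 ≤ ((M.H : ℝ) * Rmax) ^ 2 := by
        have h1 := (hQhat x y h).1; have h2 := (hQhat x y h).2
        nlinarith
      have : (Y1 x y h) ^ 2 = (Fintype.card Y : ℝ) ^ 2 *
          ((if y = ghat h x then (1:ℝ) else 0) - π h x y) ^ 2 * (Qhat x y h) ^ 2 := by
        simp only [Y1]; ring
      rw [this]
      have hsq : ((if y = ghat h x then (1:ℝ) else 0) - π h x y) ^ 2
          ≤ |(if y = ghat h x then (1:ℝ) else 0) - π h x y| := by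
        nlinarith [abs_nonneg ((if y = ghat h x then (1:ℝ) else 0) - π h x y),
          sq_abs ((if y = ghat h x then (1:ℝ) else 0) - π h x y)]
      have key := mul_le_mul_of_nonneg_left
        (mul_le_mul hsq hQ2 (sq_nonneg (Qhat x y h))
          (abs_nonneg ((if y = ghat h x then (1:ℝ) else 0) - π h x y)))
        (sq_nonneg (Fintype.card Y : ℝ))
      nlinarith [key]
    calc ∑ y, (Y1 x y h) ^ 2
        ≤ ∑ y, (Fintype.card Y : ℝ) ^ 2 * ((M.H : ℝ) * Rmax) ^ 2 *
            |(if y = ghat h x then (1:ℝ) else 0) - π h x y| :=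
          Finset.sum_le_sum (fun y _ => step y)
      _ = (Fintype.card Y : ℝ) ^ 2 * ((M.H : ℝ) * Rmax) ^ 2 *
            ∑ y, |(if y = ghat h x then (1:ℝ) else 0) - π h x y| := by
          rw [← Finset.mul_sum]
      _ ≤ (Fintype.card Y : ℝ) ^ 2 * ((M.H : ℝ) * Rmax) ^ 2 * 2 := by
          apply mul_le_mul_of_nonneg_left _ (by positivity)
          calc ∑ y, |(if y = ghat h x then (1:ℝ) else 0) - π h x y|
              ≤ ∑ y, ((if y = ghat h x then (1:ℝ) else 0) + π h x y) := by
                apply Finset.sum_le_sum; intro y _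
                have := hπ.1 h x y
                rw [abs_sub_le_iff]; constructor <;> split_ifs <;> simp <;> linarith
            _ = (∑ y, (if y = ghat h x then (1:ℝ) else 0)) + ∑ y, π h x y :=
                Finset.sum_add_distrib
            _ = 2 := by
                rw [hπ.2 h x, Finset.sum_ite_eq' Finset.univ (ghat h x) (fun _ => (1:ℝ))]
                simp
                norm_num
      _ = 2 * (Fintype.card Y : ℝ) ^ 2 * ((M.H : ℝ) * Rmax) ^ 2 := by ring
  have hmain : Edist (fun x y h => (Y1 x y h) ^ 2)
      ≤ 2 * (Fintype.card Y : ℝ) * (M.H : ℝ) ^ 2 * Rmax ^ 2 := by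
    have : Edist (fun x y h => (Y1 x y h) ^ 2)
        ≤ ∑ h ∈ Icc 1 M.H, ∑ x, dXH x h * (2 * (Fintype.card Y : ℝ) * ((M.H : ℝ) * Rmax) ^ 2) := by
      apply Finset.sum_le_sum; intro h _
      apply Finset.sum_le_sum; intro x _
      have := hinner x h
      have hd := hd0 x h
      calc dXH x h * ((Fintype.card Y : ℝ))⁻¹ * ∑ y, (Y1 x y h) ^ 2
          ≤ dXH x h * ((Fintype.card Y : ℝ))⁻¹ *
              (2 * (Fintype.card Y : ℝ) ^ 2 * ((M.H : ℝ) * Rmax) ^ 2) := by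
            apply mul_le_mul_of_nonneg_left this (by positivity)
        _ = dXH x h * (2 * (Fintype.card Y : ℝ) * ((M.H : ℝ) * Rmax) ^ 2) := by
            field_simp
    calc Edist (fun x y h => (Y1 x y h) ^ 2)
        ≤ ∑ h ∈ Icc 1 M.H, ∑ x, dXH x h * (2 * (Fintype.card Y : ℝ) * ((M.H : ℝ) * Rmax) ^ 2) :=
          this
      _ = (∑ h ∈ Icc 1 M.H, ∑ x, dXH x h) * (2 * (Fintype.card Y : ℝ) * ((M.H : ℝ) * Rmax) ^ 2) := by
          rw [Finset.sum_mul]; congr 1; ext h; rw [Finset.sum_mul]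
      _ = 2 * (Fintype.card Y : ℝ) * (M.H : ℝ) ^ 2 * Rmax ^ 2 := by
          rw [hd1]; ring
  exact ⟨by nlinarith [sq_nonneg (Edist Y1)], hmain⟩
end

section
/- L²-to-advantage transfer. Let π be a policy of a finite-horizon MDP, let d be a distribution over pairs (x,h) ∈ X × {1,…,H}, extended to triples (x,y,h) by drawing y uniformly from Y, and for any policy π'' define A_d(π'') = E_{(x,h)~d} E_{y~π''_h(·|x)}[A_h^π(x,y)]. Let Q̂ : X × Y × {1,…,H} → ℝ satisfy E_{(x,y,h)~d}[(Q̂(x,y,h) − Q_h^π(x,y))²] ≤ ε̂², let π̂⁺_h(x) ∈ argmax_{y∈Y} Q̂(x,y,h) and π⁺_h(x) ∈ argmax_{y∈Y} A_h^π(x,y). Then |A_d(π̂⁺) − A_d(π⁺)| ≤ 2·√(|Y|)·ε̂. -/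
open Finset MeasureTheory

attribute [local instance] Classical.propDecidable

variable {X Y : Type*} [Fintype X] [Fintype Y]

/-- **`L²`-to-advantage transfer.**
If `E_{(x,y,h)~d}[(Q̂ − Q_h^π)²] ≤ ε̂²` (with `y` uniform given `(x,h)`), then the
policy advantages under `d` of the empirical greedy `π̂⁺` and the true greedy `π⁺`
differ by at most `2·√|Y|·ε̂`. -/
theorem l2_to_advantage_transfer
    {X Y : Type*} [Fintype X] [Fintype Y] [Nonempty X] [Nonempty Y]
    (M : MDP X Y) (π : ℕ → X → Y → ℝ) (hπ : IsPolicy M π)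
    (dXH : X → ℕ → ℝ)
    (hd0 : ∀ x h, 0 ≤ dXH x h)
    (hdsupp : ∀ x h, h ∉ Icc 1 M.H → dXH x h = 0)
    (hd1 : ∑ h ∈ Icc 1 M.H, ∑ x, dXH x h = 1)
    (Qhat : X → Y → ℕ → ℝ) (εhat : ℝ) (hε : 0 ≤ εhat)
    (hl2 : ∑ h ∈ Icc 1 M.H, ∑ x, dXH x h * ((Fintype.card Y : ℝ))⁻¹ *
        ∑ y, (Qhat x y h - Qval M π h x y) ^ 2 ≤ εhat ^ 2)
    (ghat : ℕ → X → Y) (hghat : ∀ h x y, Qhat x y h ≤ Qhat x (ghat h x) h)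
    (g : ℕ → X → Y) (hg : ∀ h x y, Aval M π h x y ≤ Aval M π h x (g h x)) :
    |(∑ h ∈ Icc 1 M.H, ∑ x, dXH x h * Aval M π h x (ghat h x)) -
        (∑ h ∈ Icc 1 M.H, ∑ x, dXH x h * Aval M π h x (g h x))|
      ≤ 2 * Real.sqrt (Fintype.card Y) * εhat := by

  classical
  set e : X → ℕ → ℝ := fun x h => Real.sqrt (∑ y, (Qhat x y h - Qval M π h x y) ^ 2) with he
  have he0 : ∀ x h, 0 ≤ e x h := fun x h => Real.sqrt_nonneg _
  have herr : ∀ h x y, |Qhat x y h - Qval M π h x y| ≤ e x h := by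
    intro h x y
    have h1 : (Qhat x y h - Qval M π h x y) ^ 2 ≤ ∑ y', (Qhat x y' h - Qval M π h x y') ^ 2 :=
      Finset.single_le_sum (f := fun y' => (Qhat x y' h - Qval M π h x y') ^ 2)
        (fun i _ => sq_nonneg _) (Finset.mem_univ y)
    calc |Qhat x y h - Qval M π h x y|
        = Real.sqrt ((Qhat x y h - Qval M π h x y) ^ 2) := (Real.sqrt_sq_eq_abs _).symm
      _ ≤ e x h := Real.sqrt_le_sqrt h1
  have hpt : ∀ h x, -(2 * e x h) ≤ Aval M π h x (ghat h x) - Aval M π h x (g h x) := by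
    intro h x
    have h1 : Aval M π h x (ghat h x) - Aval M π h x (g h x)
        = (Qval M π h x (ghat h x) - Qhat x (ghat h x) h)
          + (Qhat x (ghat h x) h - Qhat x (g h x) h)
          + (Qhat x (g h x) h - Qval M π h x (g h x)) := by
      simp only [Aval]; ring
    have a3 := hghat h x (g h x)
    have a1 := abs_le.mp (herr h x (ghat h x))
    have a2 := abs_le.mp (herr h x (g h x))
    rw [h1]; linarith [a1.1, a1.2, a2.1, a2.2]
  -- bound on the weighted error sum via Cauchy-Schwarz
  have hS : ∑ h ∈ Icc 1 M.H, ∑ x, dXH x h * e x h ≤ Real.sqrt (Fintype.card Y) * εhat := by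
    set s := (Icc 1 M.H) ×ˢ (univ : Finset X) with hs
    have hflat : ∑ h ∈ Icc 1 M.H, ∑ x, dXH x h * e x h
        = ∑ p ∈ s, dXH p.2 p.1 * e p.2 p.1 := by rw [hs, Finset.sum_product]
    have hcs := Finset.sum_mul_sq_le_sq_mul_sq s
      (fun p => Real.sqrt (dXH p.2 p.1)) (fun p => Real.sqrt (dXH p.2 p.1) * e p.2 p.1)
    have heq1 : ∀ p ∈ s, Real.sqrt (dXH p.2 p.1) * (Real.sqrt (dXH p.2 p.1) * e p.2 p.1)
        = dXH p.2 p.1 * e p.2 p.1 := by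
      intro p _
      rw [← mul_assoc, Real.mul_self_sqrt (hd0 _ _)]
    have heq2 : ∀ p ∈ s, Real.sqrt (dXH p.2 p.1) ^ 2 = dXH p.2 p.1 := by
      intro p _; exact Real.sq_sqrt (hd0 _ _)
    have heq3 : ∀ p ∈ s, (Real.sqrt (dXH p.2 p.1) * e p.2 p.1) ^ 2
        = dXH p.2 p.1 * (e p.2 p.1) ^ 2 := by
      intro p _
      rw [mul_pow, Real.sq_sqrt (hd0 _ _)]
    rw [Finset.sum_congr rfl heq1, Finset.sum_congr rfl heq2, Finset.sum_congr rfl heq3] at hcs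
    have hsum1 : ∑ p ∈ s, dXH p.2 p.1 = 1 := by
      rw [hs, Finset.sum_product]; exact hd1
    have hsum2 : ∑ p ∈ s, dXH p.2 p.1 * (e p.2 p.1) ^ 2
        ≤ (Fintype.card Y : ℝ) * εhat ^ 2 := by
      have : ∑ p ∈ s, dXH p.2 p.1 * (e p.2 p.1) ^ 2
          = (Fintype.card Y : ℝ) * ∑ h ∈ Icc 1 M.H, ∑ x, dXH x h * ((Fintype.card Y : ℝ))⁻¹ *
              ∑ y, (Qhat x y h - Qval M π h x y) ^ 2 := by
        rw [hs, Finset.sum_product, Finset.mul_sum]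
        refine Finset.sum_congr rfl fun h _ => ?_
        rw [Finset.mul_sum]
        refine Finset.sum_congr rfl fun x _ => ?_
        have hcard : (0 : ℝ) < (Fintype.card Y : ℝ) := by
          exact_mod_cast Fintype.card_pos
        have : (e x h) ^ 2 = ∑ y, (Qhat x y h - Qval M π h x y) ^ 2 :=
          Real.sq_sqrt (Finset.sum_nonneg fun y _ => sq_nonneg _)
        rw [this]
        field_simp
      rw [this]
      have hcard : (0 : ℝ) ≤ (Fintype.card Y : ℝ) := by positivity
      exact mul_le_mul_of_nonneg_left hl2 hcard
    have hSnn : 0 ≤ ∑ p ∈ s, dXH p.2 p.1 * e p.2 p.1 :=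
      Finset.sum_nonneg fun p _ => mul_nonneg (hd0 _ _) (he0 _ _)
    have hsq : (∑ p ∈ s, dXH p.2 p.1 * e p.2 p.1) ^ 2
        ≤ (Fintype.card Y : ℝ) * εhat ^ 2 := by
      calc (∑ p ∈ s, dXH p.2 p.1 * e p.2 p.1) ^ 2
          ≤ (∑ p ∈ s, dXH p.2 p.1) * (∑ p ∈ s, dXH p.2 p.1 * (e p.2 p.1) ^ 2) := hcs
        _ = ∑ p ∈ s, dXH p.2 p.1 * (e p.2 p.1) ^ 2 := by rw [hsum1, one_mul]
        _ ≤ _ := hsum2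
    rw [hflat]
    have := Real.sqrt_le_sqrt hsq
    rwa [Real.sqrt_sq hSnn, Real.sqrt_mul (by positivity), Real.sqrt_sq hε] at this
  -- the difference
  have hD : (∑ h ∈ Icc 1 M.H, ∑ x, dXH x h * Aval M π h x (ghat h x)) -
      (∑ h ∈ Icc 1 M.H, ∑ x, dXH x h * Aval M π h x (g h x))
      = ∑ h ∈ Icc 1 M.H, ∑ x, dXH x h * (Aval M π h x (ghat h x) - Aval M π h x (g h x)) := by
    rw [← Finset.sum_sub_distrib]
    refine Finset.sum_congr rfl fun h _ => ?_
    rw [← Finset.sum_sub_distrib]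
    exact Finset.sum_congr rfl fun x _ => (mul_sub _ _ _).symm
  rw [hD, abs_le]
  constructor
  · have hlb : ∀ h ∈ Icc 1 M.H, ∀ x ∈ (univ : Finset X),
        dXH x h * (-(2 * e x h)) ≤ dXH x h * (Aval M π h x (ghat h x) - Aval M π h x (g h x)) :=
      fun h _ x _ => mul_le_mul_of_nonneg_left (hpt h x) (hd0 x h)
    have h1 : ∑ h ∈ Icc 1 M.H, ∑ x, dXH x h * (-(2 * e x h))
        ≤ ∑ h ∈ Icc 1 M.H, ∑ x, dXH x h * (Aval M π h x (ghat h x) - Aval M π h x (g h x)) :=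
      Finset.sum_le_sum fun h hh => Finset.sum_le_sum (hlb h hh)
    have h2 : ∑ h ∈ Icc 1 M.H, ∑ x, dXH x h * (-(2 * e x h))
        = -(2 * ∑ h ∈ Icc 1 M.H, ∑ x, dXH x h * e x h) := by
      simp only [Finset.mul_sum, ← Finset.sum_neg_distrib]
      refine Finset.sum_congr rfl fun h _ => Finset.sum_congr rfl fun x _ => by ring
    rw [h2] at h1
    have : 2 * (∑ h ∈ Icc 1 M.H, ∑ x, dXH x h * e x h) ≤ 2 * (Real.sqrt (Fintype.card Y) * εhat) := by
      linarith
    linarith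
  · have hub : ∑ h ∈ Icc 1 M.H, ∑ x,
        dXH x h * (Aval M π h x (ghat h x) - Aval M π h x (g h x)) ≤ 0 := by
      refine Finset.sum_nonpos fun h _ => Finset.sum_nonpos fun x _ => ?_
      exact mul_nonpos_of_nonneg_of_nonpos (hd0 x h) (by linarith [hg h x (ghat h x)])
    have : 0 ≤ 2 * Real.sqrt (Fintype.card Y) * εhat := by positivity
    linarith
end

section
/- Moments of the random-reset estimator in the tightness construction. Consider the single-step (H = 1) MDP with two states {x₁, x₂}, initial distribution μ(x₁) = p, μ(x₂) = 1 − p with p ∈ (0,1), action set {y₀, y₁, …, y_{|Y|−1}} with |Y| ≥ 2, base policy π playing y₀ deterministically in every state, and rewards r(x, y_k) = R_max/2 for all k ≠ 1, r(x₁, y₁) = R_max/2 + τ, r(x₂, y₁) = R_max/2 + ε, where 0 < τ ≤ R_max/2 and 0 ≤ ε ≤ τ. Let the greedy policy π⁺ play y₁ everywhere. Sample x ~ μ and y ~ Unif(Y) and define Y₁ = |Y|·(1{y = y₁} − 1{y = y₀})·r(x, y). Then E[Y₁] = p·τ + (1 − p)·ε = 𝔸_{π,μ}(π⁺), and Var(Y₁)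 ≥ |Y|·R_max²/4. -/
open Finset

/-!
Summing the estimator over the uniformly drawn action leaves only the terms `y₁` and `y₀`, so
`E[Y₁ | x] = r(x, y₁) − r(x, y₀) = A^π(x, y₁)` for every reward, while
`E[Y₁² | x] = |Y| (r(x, y₁)² + r(x, y₀)²)`. With `a = R_max/2` and `E = p τ + (1 − p) ε ≥ 0`
this makes `Var(Y₁) = |Y| (2a² + 2aE + pτ² + (1 − p)ε²) − E²`, and Jensen's inequality
`E² ≤ pτ² + (1 − p)ε²` leaves at least `|Y| a²`.
-/

section ResetEstimator

variable {m : ℕ} (hm : 2 ≤ m) (f : Fin m → ℝ)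

lemma sum_eq_zero_add_one_of_support {g : Fin m → ℝ}
    (hg : ∀ y : Fin m, (y : ℕ) ≠ 0 → (y : ℕ) ≠ 1 → g y = 0) :
    ∑ y, g y = g ⟨0, Nat.zero_lt_of_lt hm⟩ + g ⟨1, hm⟩ :=
  Fintype.sum_eq_add _ _ (by simp [Fin.ext_iff]) fun y hy =>
    hg y (fun h => hy.1 (Fin.ext h)) (fun h => hy.2 (Fin.ext h))

lemma sum_reset_estimator :
    ∑ y : Fin m, (m : ℝ) * ((if (y : ℕ) = 1 then 1 else 0) - (if (y : ℕ) = 0 then 1 else 0)) * f y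
      = m * (f ⟨1, hm⟩ - f ⟨0, Nat.zero_lt_of_lt hm⟩) := by
  rw [sum_eq_zero_add_one_of_support hm (by intro y h0 h1; simp [h0, h1])]
  simp only [zero_ne_one, one_ne_zero, ↓reduceIte]
  ring

lemma sum_reset_estimator_sq :
    ∑ y : Fin m,
        ((m : ℝ) * ((if (y : ℕ) = 1 then 1 else 0) - (if (y : ℕ) = 0 then 1 else 0)) * f y) ^ 2
      = m ^ 2 * (f ⟨1, hm⟩ ^ 2 + f ⟨0, Nat.zero_lt_of_lt hm⟩ ^ 2) := by
  rw [sum_eq_zero_add_one_of_support hm (by intro y h0 h1; simp [h0, h1])]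
  simp only [zero_ne_one, one_ne_zero, ↓reduceIte]
  ring

end ResetEstimator

lemma mul_sq_le_two_point_second_moment_sub_sq_mean {m a p τ ε : ℝ} (hm : 1 ≤ m) (ha : 0 ≤ a)
    (hp0 : 0 ≤ p) (hp1 : p ≤ 1) (hτ : 0 ≤ τ) (hε : 0 ≤ ε) :
    m * a ^ 2 ≤ m * (p * ((a + τ) ^ 2 + a ^ 2) + (1 - p) * ((a + ε) ^ 2 + a ^ 2))
      - (p * τ + (1 - p) * ε) ^ 2 := by
  have hjensen : (p * τ + (1 - p) * ε) ^ 2 ≤ p * τ ^ 2 + (1 - p) * ε ^ 2 := by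
    simpa using (even_two.convexOn_pow (𝕜 := ℝ)).2 (Set.mem_univ τ) (Set.mem_univ ε) hp0
      (by linarith) (by ring)
  have hmean : 0 ≤ p * τ + (1 - p) * ε := by nlinarith
  nlinarith [mul_nonneg (sub_nonneg.2 hm) (add_nonneg (mul_nonneg hp0 (sq_nonneg τ))
    (mul_nonneg (sub_nonneg.2 hp1) (sq_nonneg ε))), mul_nonneg (mul_nonneg ha hmean)
    (zero_le_one.trans hm)]

/-- **Moments of the random-reset estimator in the tightness construction.**
In the single-step MDP with two states (`0 = x₁`, `1 = x₂`), `m = |Y| ≥ 2` actions,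
initial distribution `μ = (p, 1−p)`, base policy playing action `y₀` everywhere and
rewards `r(x, y_k) = R_max/2` for `k ≠ 1`, `r(x₁, y₁) = R_max/2 + τ`,
`r(x₂, y₁) = R_max/2 + ε`, the per-sample term
`Y₁ = |Y|·(1{y = y₁} − 1{y = y₀})·r(x,y)` under `x ~ μ`, `y ~ Unif(Y)` satisfies
`E[Y₁] = p·τ + (1−p)·ε = 𝔸_{π,μ}(π⁺)` and `Var(Y₁) ≥ |Y|·R_max²/4`,
where `π⁺` plays `y₁` everywhere, so that
`𝔸_{π,μ}(π⁺) = E_{x~μ}[A^π(x, y₁)]` with `A^π(x,y) = r(x,y) − r(x,y₀)`. -/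
theorem tightness_construction_moments
    (m : ℕ) (hm : 2 ≤ m) (p τ ε Rmax : ℝ)
    (hp0 : 0 < p) (hp1 : p < 1) (hτ0 : 0 < τ) (hτR : τ ≤ Rmax / 2)
    (hε0 : 0 ≤ ε) :
    let μ : Fin 2 → ℝ := ![p, 1 - p]
    let r : Fin 2 → Fin m → ℝ := fun x k =>
      if (k : ℕ) = 1 then Rmax / 2 + (if x = 0 then τ else ε) else Rmax / 2
    let Y1 : Fin 2 → Fin m → ℝ := fun x y =>
      (m : ℝ) * ((if (y : ℕ) = 1 then 1 else 0) - (if (y : ℕ) = 0 then 1 else 0)) * r x y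
    let Edist : (Fin 2 → Fin m → ℝ) → ℝ := fun f =>
      ∑ x, μ x * ((m : ℝ))⁻¹ * ∑ y, f x y
    let A : Fin 2 → Fin m → ℝ := fun x y => r x y - r x ⟨0, by omega⟩
    Edist Y1 = p * τ + (1 - p) * ε ∧
      Edist Y1 = ∑ x, μ x * A x ⟨1, by omega⟩ ∧
      (m : ℝ) * Rmax ^ 2 / 4 ≤ Edist (fun x y => Y1 x y ^ 2) - (Edist Y1) ^ 2 := by
  intro μ r Y1 Edist A
  have hm0 : (m : ℝ) ≠ 0 := by positivity
  have hunbiased : Edist Y1 = ∑ x, μ x * A x ⟨1, hm⟩ := by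
    simp only [Edist, Y1, sum_reset_estimator hm]
    exact sum_congr rfl fun x _ => by field_simp; rfl
  have hmean : Edist Y1 = p * τ + (1 - p) * ε := by
    simp [hunbiased, Fin.sum_univ_two, μ, A, r]
  have hsecond : Edist (fun x y => Y1 x y ^ 2) = m * (p * ((Rmax / 2 + τ) ^ 2 + (Rmax / 2) ^ 2)
      + (1 - p) * ((Rmax / 2 + ε) ^ 2 + (Rmax / 2) ^ 2)) := by
    simp only [Edist, Y1, sum_reset_estimator_sq hm, Fin.sum_univ_two]
    simp only [μ, r, Fin.isValue, Matrix.cons_val_zero, Matrix.cons_val_one,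
      Matrix.cons_val_fin_one, ↓reduceIte, zero_ne_one, one_ne_zero]
    field_simp
  refine ⟨hmean, hunbiased, ?_⟩
  rw [hsecond, hmean]
  have := mul_sq_le_two_point_second_moment_sub_sq_mean (m := m) (a := Rmax / 2)
    (by exact_mod_cast (by omega : 1 ≤ m)) (by linarith) hp0.le hp1.le hτ0.le hε0
  linarith
end
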